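/- arXiv:2310.12096 — 2 statements merged into one kernel-verified Lean document; each statement's English description precedes it below -/
import Mathlib

section
/- Let e be a vital edge and C(e) a mincut for e (an (s,t)-cut of least capacity among those in which e is a contributing edge). Then there exists a maximum (s,t)-flow f in G such that every edge entering C(e) carries zero flow, the edge e carries exactly w_min(e) flow (where w_min(e) is the decrease in the minimum (s,t)-cut capacity caused by deleting e), and every other contributing edge e' of C(e) is fully saturated, i.e., f(e') = w(e'). -/
open Finset

variable {V : Type*} [Fintype V] [DecidableEq V]

/-- capacity of the cut given by the source-side vertex set `C`:
total capacity of edges with tail in `C` and head outside `C`. -/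
noncomputable def cutCap (E : Finset (V × V)) (w : V × V → ℝ) (C : Finset V) : ℝ :=
  ∑ e ∈ E.filter (fun e => e.1 ∈ C ∧ e.2 ∉ C), w e

/-- `C` is an (s,t)-cut. -/
def IsCut (s t : V) (C : Finset V) : Prop := s ∈ C ∧ t ∉ C

/-- edge `e` is a contributing (outgoing) edge of the cut `C`. -/
def Contributes (e : V × V) (C : Finset V) : Prop := e.1 ∈ C ∧ e.2 ∉ C

/-- `f` is a feasible (s,t)-flow on edge set `E` with capacities `w`. -/
structure IsFlow (E : Finset (V × V)) (w : V × V → ℝ) (s t : V) (f : V × V → ℝ) : Prop where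
  nonneg : ∀ e ∈ E, 0 ≤ f e
  le_cap : ∀ e ∈ E, f e ≤ w e
  support : ∀ e, e ∉ E → f e = 0
  conserve : ∀ v, v ≠ s → v ≠ t →
    ∑ e ∈ E.filter (fun e => e.1 = v), f e = ∑ e ∈ E.filter (fun e => e.2 = v), f e

/-- value of an (s,t)-flow: the net flow out of `s`. -/
noncomputable def flowValue (E : Finset (V × V)) (s : V) (f : V × V → ℝ) : ℝ :=
  ∑ e ∈ E.filter (fun e => e.1 = s), f e - ∑ e ∈ E.filter (fun e => e.2 = s), f e

/-- `f` is a maximum (s,t)-flow. -/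
def IsMaxFlow (E : Finset (V × V)) (w : V × V → ℝ) (s t : V) (f : V × V → ℝ) : Prop :=
  IsFlow E w s t f ∧ ∀ g, IsFlow E w s t g → flowValue E s g ≤ flowValue E s f

/-- capacity of a minimum (s,t)-cut. -/
noncomputable def minCutCap (E : Finset (V × V)) (w : V × V → ℝ) (s t : V) : ℝ :=
  sInf {x | ∃ C : Finset V, IsCut s t C ∧ cutCap E w C = x}

/-- `e` is a vital edge: deleting it strictly decreases the min (s,t)-cut capacity. -/
def Vital (E : Finset (V × V)) (w : V × V → ℝ) (s t : V) (e : V × V) : Prop :=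
  e ∈ E ∧ minCutCap (E.erase e) w s t < minCutCap E w s t

/-- `C` is a mincut for the edge `e`: a least-capacity (s,t)-cut in which `e` contributes. -/
def IsMincutFor (E : Finset (V × V)) (w : V × V → ℝ) (s t : V) (e : V × V)
    (C : Finset V) : Prop :=
  IsCut s t C ∧ Contributes e C ∧
    ∀ C', IsCut s t C' → Contributes e C' → cutCap E w C ≤ cutCap E w C'

/-- total flow on edges leaving the cut `C`. -/
noncomputable def flowOut (E : Finset (V × V)) (f : V × V → ℝ) (C : Finset V) : ℝ :=
  ∑ e ∈ E.filter (fun e => e.1 ∈ C ∧ e.2 ∉ C), f e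

/-- total flow on edges entering the cut `C`. -/
noncomputable def flowIn (E : Finset (V × V)) (f : V × V → ℝ) (C : Finset V) : ℝ :=
  ∑ e ∈ E.filter (fun e => e.1 ∉ C ∧ e.2 ∈ C), f e


/-! Lower the capacity of `e` to `w_min(e) = f* - m`, where `m` is the minimum cut capacity of
`G ∖ {e}`. Since `e` is vital, every minimum cut of `G ∖ {e}` has `e` contributing, so
`cap C = m + w e`. After lowering, `C` therefore has capacity `f*`, cuts through `e` still cost at
least as much as `C`, and the other cuts are unchanged: `C` is a minimum cut. A maximum flow for the
lowered capacities is feasible for `w` and has value `f*`, so it is maximum; as its value equals the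
capacity of `C`, it saturates every edge leaving `C` (carrying `w_min(e)` on `e`) and vanishes on
every edge entering `C`.

Max-flow min-cut comes from a maximum flow, which exists by compactness: the vertices reachable
from `s` in its residual graph form a cut that it saturates, since reaching `t` would give an
augmenting direction. -/

open Filter Topology

section Flows

variable {V : Type*} [DecidableEq V] {E : Finset (V × V)} {w f g : V × V → ℝ} {s t : V}
  {C : Finset V}

noncomputable def netOut (E : Finset (V × V)) (f : V × V → ℝ) (v : V) : ℝ :=
  ∑ e ∈ E.filter (fun e => e.1 = v), f e - ∑ e ∈ E.filter (fun e => e.2 = v), f e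

lemma flowValue_eq_netOut (E : Finset (V × V)) (s : V) (f : V × V → ℝ) :
    flowValue E s f = netOut E f s :=
  rfl

lemma netOut_add_smul (E : Finset (V × V)) (f g : V × V → ℝ) (c : ℝ) (v : V) :
    netOut E (f + c • g) v = netOut E f v + c * netOut E g v := by
  simp only [netOut, Pi.add_apply, Pi.smul_apply, smul_eq_mul, sum_add_distrib, ← mul_sum]
  ring

lemma sum_netOut (E : Finset (V × V)) (f : V × V → ℝ) (C : Finset V) :
    ∑ v ∈ C, netOut E f v = flowOut E f C - flowIn E f C := by
  simp only [netOut]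
  rw [sum_sub_distrib, sum_fiberwise_eq_sum_filter, sum_fiberwise_eq_sum_filter, flowOut, flowIn,
    sum_filter, sum_filter, sum_filter, sum_filter, ← sum_sub_distrib, ← sum_sub_distrib]
  refine sum_congr rfl fun e _ => ?_
  by_cases h1 : e.1 ∈ C <;> by_cases h2 : e.2 ∈ C <;> simp [h1, h2]

lemma IsFlow.flowValue_eq_flowOut_sub_flowIn (hf : IsFlow E w s t f) (hC : IsCut s t C) :
    flowValue E s f = flowOut E f C - flowIn E f C := by
  rw [← sum_netOut, sum_eq_single_of_mem s hC.1]
  · rfl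
  · intro v hv hvs
    exact sub_eq_zero.2 (hf.conserve v hvs (ne_of_mem_of_not_mem hv hC.2))

lemma IsFlow.flowOut_le_cutCap (hf : IsFlow E w s t f) (C : Finset V) :
    flowOut E f C ≤ cutCap E w C :=
  sum_le_sum fun d hd => hf.le_cap d (mem_filter.1 hd).1

lemma IsFlow.flowIn_nonneg (hf : IsFlow E w s t f) (C : Finset V) : 0 ≤ flowIn E f C :=
  sum_nonneg fun d hd => hf.nonneg d (mem_filter.1 hd).1

lemma IsFlow.flowValue_le_cutCap (hf : IsFlow E w s t f) (hC : IsCut s t C) :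
    flowValue E s f ≤ cutCap E w C := by
  linarith [hf.flowValue_eq_flowOut_sub_flowIn hC, hf.flowOut_le_cutCap C, hf.flowIn_nonneg C]

lemma IsFlow.flowValue_eq_cutCap_iff (hf : IsFlow E w s t f) (hC : IsCut s t C) :
    flowValue E s f = cutCap E w C ↔
      (∀ d ∈ E, Contributes d C → f d = w d) ∧ (∀ d ∈ E, d.1 ∉ C → d.2 ∈ C → f d = 0) := by
  have hout : flowOut E f C = cutCap E w C ↔ ∀ d ∈ E, Contributes d C → f d = w d := by
    rw [flowOut, cutCap, sum_eq_sum_iff_of_le fun d hd => hf.le_cap d (mem_filter.1 hd).1]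
    simp only [mem_filter, and_imp, Contributes]
  have hin : flowIn E f C = 0 ↔ ∀ d ∈ E, d.1 ∉ C → d.2 ∈ C → f d = 0 := by
    rw [flowIn, sum_eq_zero_iff_of_nonneg fun d hd => hf.nonneg d (mem_filter.1 hd).1]
    simp only [mem_filter, and_imp]
  rw [← hout, ← hin, hf.flowValue_eq_flowOut_sub_flowIn hC]
  constructor
  · intro h
    constructor <;> linarith [hf.flowOut_le_cutCap C, hf.flowIn_nonneg C]
  · rintro ⟨h₁, h₂⟩
    rw [h₁, h₂, sub_zero]

lemma IsFlow.mono {w' : V × V → ℝ} (hf : IsFlow E w s t f) (hw : ∀ d ∈ E, w d ≤ w' d) :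
    IsFlow E w' s t f :=
  ⟨hf.nonneg, fun d hd => (hf.le_cap d hd).trans (hw d hd), hf.support, hf.conserve⟩

lemma isClosed_setOf_isFlow (E : Finset (V × V)) (w : V × V → ℝ) (s t : V) :
    IsClosed {f | IsFlow E w s t f} := by
  have : {f | IsFlow E w s t f} = {f | (∀ e ∈ E, 0 ≤ f e) ∧ (∀ e ∈ E, f e ≤ w e) ∧
      (∀ e, e ∉ E → f e = 0) ∧ ∀ v, v ≠ s → v ≠ t →
        ∑ e ∈ E.filter (fun e => e.1 = v), f e = ∑ e ∈ E.filter (fun e => e.2 = v), f e} :=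
    Set.ext fun f => ⟨fun h => ⟨h.1, h.2, h.3, h.4⟩, fun ⟨h₁, h₂, h₃, h₄⟩ => ⟨h₁, h₂, h₃, h₄⟩⟩
  simp only [this, Set.ofPred_and, Set.ofPred_forall]
  refine .inter ?_ (.inter ?_ (.inter ?_ ?_)) <;>
    refine isClosed_iInter fun _ => isClosed_iInter fun _ => ?_
  · exact isClosed_le (by fun_prop) (by fun_prop)
  · exact isClosed_le (by fun_prop) (by fun_prop)
  · exact isClosed_eq (by fun_prop) (by fun_prop)
  · exact isClosed_iInter fun _ => isClosed_eq (by fun_prop) (by fun_prop)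

lemma exists_isMaxFlow (s t : V) (hw : ∀ e ∈ E, 0 ≤ w e) : ∃ f, IsMaxFlow E w s t f := by
  have hbox : {f | IsFlow E w s t f} ⊆ Set.Icc 0 fun e => max (w e) 0 := by
    intro f hf
    refine ⟨fun e => ?_, fun e => ?_⟩ <;> by_cases he : e ∈ E
    · exact hf.nonneg e he
    · exact (hf.support e he).ge
    · exact le_max_of_le_left (hf.le_cap e he)
    · exact (hf.support e he).trans_le (le_max_right _ _)
  have hzero : IsFlow E w s t 0 := ⟨fun _ _ => le_rfl, hw, fun _ _ => rfl, fun _ _ _ => by simp⟩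
  have hcont : Continuous (flowValue E s) := by unfold flowValue; fun_prop
  obtain ⟨f, hf, hmax⟩ := (isCompact_Icc.of_isClosed_subset (isClosed_setOf_isFlow E w s t)
    hbox).exists_isMaxOn ⟨0, hzero⟩ hcont.continuousOn
  exact ⟨f, hf, fun g hg => hmax hg⟩

def ResidualAdj (E : Finset (V × V)) (w f : V × V → ℝ) (a b : V) : Prop :=
  ((a, b) ∈ E ∧ f (a, b) < w (a, b)) ∨ ((b, a) ∈ E ∧ 0 < f (b, a))

/-- `f + ε • g` respects the capacity bounds for all small `ε > 0`. -/
structure IsResidualDirection (E : Finset (V × V)) (w f g : V × V → ℝ) : Prop where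
  support : ∀ d, d ∉ E → g d = 0
  lt_cap : ∀ d ∈ E, 0 < g d → f d < w d
  pos : ∀ d ∈ E, g d < 0 → 0 < f d

lemma netOut_single {d : V × V} (hd : d ∈ E) (v : V) :
    netOut E (Pi.single d 1) v = (if v = d.1 then 1 else 0) - (if v = d.2 then 1 else 0) := by
  simp [netOut, sum_pi_single', hd, eq_comm]

lemma IsResidualDirection.add_smul_single (hg : IsResidualDirection E w f g) {d : V × V}
    (hd : d ∈ E) {c : ℝ} (hup : 0 < c → f d < w d) (hdown : c < 0 → 0 < f d) :
    IsResidualDirection E w f (g + c • Pi.single d 1) := by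
  have hat : (g + c • Pi.single d 1 : V × V → ℝ) d = g d + c := by simp
  have hoff : ∀ d' ≠ d, (g + c • Pi.single d 1 : V × V → ℝ) d' = g d' := fun d' hne => by
    simp [hne]
  refine ⟨fun d' hd' => ?_, fun d' hd' h => ?_, fun d' hd' h => ?_⟩ <;>
    rcases eq_or_ne d' d with rfl | hne
  · exact absurd hd hd'
  · rw [hoff d' hne, hg.support d' hd']
  · rw [hat] at h
    by_cases hc : 0 < c
    · exact hup hc
    · exact hg.lt_cap d' hd (by linarith)
  · exact hg.lt_cap d' hd' (hoff d' hne ▸ h)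
  · rw [hat] at h
    by_cases hc : c < 0
    · exact hdown hc
    · exact hg.pos d' hd (by linarith)
  · exact hg.pos d' hd' (hoff d' hne ▸ h)

lemma exists_isResidualDirection_netOut {u : V}
    (h : Relation.ReflTransGen (ResidualAdj E w f) s u) :
    ∃ g, IsResidualDirection E w f g ∧
      ∀ v, netOut E g v = (if v = s then 1 else 0) - (if v = u then 1 else 0) := by
  induction h with
  | refl => exact ⟨0, ⟨fun _ _ => rfl, by simp, by simp⟩, fun v => by simp [netOut]⟩
  | @tail b c _ hbc ih =>
    obtain ⟨g, hg, hnet⟩ := ih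
    rcases hbc with ⟨hE, hlt⟩ | ⟨hE, hpos⟩
    · refine ⟨g + (1 : ℝ) • Pi.single (b, c) 1, hg.add_smul_single hE (fun _ => hlt)
        (by norm_num), fun v => ?_⟩
      rw [netOut_add_smul, netOut_single hE, hnet]
      split_ifs <;> simp_all
    · refine ⟨g + (-1 : ℝ) • Pi.single (c, b) 1, hg.add_smul_single hE (by norm_num)
        (fun _ => hpos), fun v => ?_⟩
      rw [netOut_add_smul, netOut_single hE, hnet]
      split_ifs <;> simp_all

lemma IsFlow.exists_isFlow_add_smul (hf : IsFlow E w s t f) (hg : IsResidualDirection E w f g)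
    (hcons : ∀ v, v ≠ s → v ≠ t → netOut E g v = 0) :
    ∃ ε : ℝ, 0 < ε ∧ IsFlow E w s t (f + ε • g) := by
  have hlim : ∀ d, Tendsto (fun ε : ℝ => f d + ε * g d) (𝓝[>] 0) (𝓝 (f d)) := fun d =>
    tendsto_nhdsWithin_of_tendsto_nhds <|
      (show Continuous fun ε : ℝ => f d + ε * g d by fun_prop).tendsto' 0 _ (by simp)
  have hpos : ∀ᶠ ε in 𝓝[>] (0 : ℝ), 0 < ε := self_mem_nhdsWithin
  have hfeas : ∀ᶠ ε in 𝓝[>] (0 : ℝ), ∀ d ∈ E, 0 ≤ f d + ε * g d ∧ f d + ε * g d ≤ w d := by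
    refine (eventually_all_finset E).2 fun d hd => .and ?_ ?_
    · rcases le_or_gt 0 (g d) with h | h
      · filter_upwards [hpos] with ε hε using add_nonneg (hf.nonneg d hd) (mul_nonneg hε.le h)
      · exact ((hlim d).eventually (eventually_gt_nhds (hg.pos d hd h))).mono fun _ => le_of_lt
    · rcases le_or_gt (g d) 0 with h | h
      · filter_upwards [hpos] with ε hε
        linarith [hf.le_cap d hd, mul_nonpos_of_nonneg_of_nonpos hε.le h]
      · exact ((hlim d).eventually (eventually_lt_nhds (hg.lt_cap d hd h))).mono fun _ => le_of_lt
  obtain ⟨ε, hε, hε'⟩ := (hpos.and hfeas).exists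
  refine ⟨ε, hε, fun d hd => (hε' d hd).1, fun d hd => (hε' d hd).2, fun d hd => ?_,
    fun v hvs hvt => sub_eq_zero.1 ?_⟩
  · simp [hf.support d hd, hg.support d hd]
  · rw [← netOut, netOut_add_smul, hcons v hvs hvt, mul_zero, add_zero]
    exact sub_eq_zero.2 (hf.conserve v hvs hvt)

lemma IsMaxFlow.not_reflTransGen_residualAdj (hf : IsMaxFlow E w s t f) (hst : s ≠ t) :
    ¬ Relation.ReflTransGen (ResidualAdj E w f) s t := by
  intro h
  obtain ⟨g, hg, hnet⟩ := exists_isResidualDirection_netOut h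
  obtain ⟨ε, hε, hflow⟩ :=
    hf.1.exists_isFlow_add_smul hg fun v hvs hvt => by simp [hnet, hvs, hvt]
  have hval : flowValue E s (f + ε • g) = flowValue E s f + ε := by
    rw [flowValue_eq_netOut, flowValue_eq_netOut, netOut_add_smul]
    simp [hnet, hst]
  linarith [hf.2 _ hflow]

instance (e : V × V) (C : Finset V) : Decidable (Contributes e C) :=
  inferInstanceAs (Decidable (_ ∧ _))

lemma cutCap_eq_cutCap_erase_add (he : e ∈ E) (w : V × V → ℝ) (C : Finset V) :
    cutCap E w C = cutCap (E.erase e) w C + if Contributes e C then w e else 0 := by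
  unfold cutCap
  rw [filter_erase]
  split_ifs with h
  · rw [sum_erase_add _ _ (mem_filter.2 ⟨he, h⟩)]
  · rw [erase_eq_of_notMem (s := E.filter _) fun h' => h (mem_filter.1 h').2, add_zero]

lemma cutCap_update (he : e ∈ E) (w : V × V → ℝ) (c : ℝ) (C : Finset V) :
    cutCap E (Function.update w e c) C =
      cutCap (E.erase e) w C + if Contributes e C then c else 0 := by
  rw [cutCap_eq_cutCap_erase_add he, Function.update_self]
  congr 1
  exact sum_congr rfl fun d hd =>
    Function.update_of_ne (ne_of_mem_erase (mem_filter.1 hd).1) _ _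

end Flows

section Cuts

variable {E : Finset (V × V)} {w f : V × V → ℝ} {s t : V} {C : Finset V}

lemma finite_cutCaps (E : Finset (V × V)) (w : V × V → ℝ) (s t : V) :
    {x | ∃ C : Finset V, IsCut s t C ∧ cutCap E w C = x}.Finite :=
  (Set.finite_range (cutCap E w)).subset fun _ ⟨C, _, h⟩ => ⟨C, h⟩

lemma exists_isCut_cutCap_eq_minCutCap (hst : s ≠ t) (E : Finset (V × V)) (w : V × V → ℝ) :
    ∃ C : Finset V, IsCut s t C ∧ cutCap E w C = minCutCap E w s t := by
  refine Set.Nonempty.csInf_mem ?_ (finite_cutCaps E w s t)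
  exact ⟨_, {s}, ⟨mem_singleton_self s, fun h => hst (mem_singleton.1 h).symm⟩, rfl⟩

lemma minCutCap_le_cutCap (E : Finset (V × V)) (w : V × V → ℝ) (hC : IsCut s t C) :
    minCutCap E w s t ≤ cutCap E w C :=
  csInf_le (finite_cutCaps E w s t).bddBelow ⟨C, hC, rfl⟩

lemma IsMaxFlow.exists_isCut_flowValue_eq_cutCap (hf : IsMaxFlow E w s t f) (hst : s ≠ t) :
    ∃ C, IsCut s t C ∧ flowValue E s f = cutCap E w C := by
  classical
  set R := univ.filter (Relation.ReflTransGen (ResidualAdj E w f) s)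
  have hmem : ∀ v, v ∈ R ↔ Relation.ReflTransGen (ResidualAdj E w f) s v := by simp [R]
  have hR : IsCut s t R :=
    ⟨(hmem s).2 .refl, (hmem t).not.2 (hf.not_reflTransGen_residualAdj hst)⟩
  refine ⟨R, hR, (hf.1.flowValue_eq_cutCap_iff hR).2
    ⟨fun d hd ⟨h₁, h₂⟩ => ?_, fun d hd h₁ h₂ => ?_⟩⟩
  · by_contra hne
    exact h₂ <| (hmem _).2 <| ((hmem _).1 h₁).tail <|
      Or.inl ⟨hd, (hf.1.le_cap d hd).lt_of_ne hne⟩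
  · by_contra hne
    exact h₁ <| (hmem _).2 <| ((hmem _).1 h₂).tail <|
      Or.inr ⟨hd, (hf.1.nonneg d hd).lt_of_ne' hne⟩

end Cuts

/-- `w_min(e)` of the paper. -/
noncomputable def wMin (E : Finset (V × V)) (w : V × V → ℝ) (s t : V) (e : V × V) : ℝ :=
  minCutCap E w s t - minCutCap (E.erase e) w s t

section VitalEdge

variable {E : Finset (V × V)} {w : V × V → ℝ} {s t : V} {e : V × V} {C : Finset V}

lemma IsMincutFor.cutCap_erase_eq (hst : s ≠ t) (hv : Vital E w s t e)
    (hC : IsMincutFor E w s t e C) :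
    cutCap (E.erase e) w C = minCutCap (E.erase e) w s t := by
  refine le_antisymm ?_ (minCutCap_le_cutCap _ w hC.1)
  obtain ⟨D, hD, hDmin⟩ := exists_isCut_cutCap_eq_minCutCap hst (E.erase e) w
  by_cases hco : Contributes e D
  · have := hC.2.2 D hD hco
    rw [cutCap_eq_cutCap_erase_add hv.1 w C, cutCap_eq_cutCap_erase_add hv.1 w D, if_pos hC.2.1,
      if_pos hco] at this
    linarith
  · have := minCutCap_le_cutCap E w hD
    rw [cutCap_eq_cutCap_erase_add hv.1 w D, if_neg hco, add_zero] at this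
    linarith [hv.2]

lemma IsMincutFor.wMin_le (hst : s ≠ t) (hv : Vital E w s t e) (hC : IsMincutFor E w s t e C) :
    wMin E w s t e ≤ w e := by
  have := minCutCap_le_cutCap E w hC.1
  rw [cutCap_eq_cutCap_erase_add hv.1 w C, if_pos hC.2.1, hC.cutCap_erase_eq hst hv] at this
  rw [wMin]
  linarith

lemma IsMincutFor.cutCap_update_wMin (hst : s ≠ t) (hv : Vital E w s t e)
    (hC : IsMincutFor E w s t e C) :
    cutCap E (Function.update w e (wMin E w s t e)) C = minCutCap E w s t := by
  rw [cutCap_update hv.1, if_pos hC.2.1, hC.cutCap_erase_eq hst hv, wMin]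
  ring

lemma IsMincutFor.cutCap_update_wMin_le (hst : s ≠ t) (hv : Vital E w s t e)
    (hC : IsMincutFor E w s t e C) {C' : Finset V} (hC' : IsCut s t C') :
    cutCap E (Function.update w e (wMin E w s t e)) C ≤
      cutCap E (Function.update w e (wMin E w s t e)) C' := by
  rw [hC.cutCap_update_wMin hst hv, cutCap_update hv.1]
  by_cases hco : Contributes e C'
  · have := hC.2.2 C' hC' hco
    rw [cutCap_eq_cutCap_erase_add hv.1 w C, cutCap_eq_cutCap_erase_add hv.1 w C', if_pos hC.2.1,
      if_pos hco, hC.cutCap_erase_eq hst hv] at this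
    rw [if_pos hco, wMin]
    linarith
  · have := minCutCap_le_cutCap E w hC'
    rw [cutCap_eq_cutCap_erase_add hv.1 w C', if_neg hco] at this
    rwa [if_neg hco]

end VitalEdge

/-- GenFlowCut, forward direction: for a vital edge `e` and a mincut `C` for `e`,
there is a maximum flow with zero flow on all edges entering `C`, flow exactly
`w_min(e)` on `e`, and full saturation of every other contributing edge of `C`. -/
theorem genFlowCut_forward (E : Finset (V × V)) (w : V × V → ℝ) (s t : V)
    (hst : s ≠ t) (hpos : ∀ e ∈ E, 0 < w e) (e : V × V)
    (hvit : Vital E w s t e) (C : Finset V) (hC : IsMincutFor E w s t e C) :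
    ∃ f, IsMaxFlow E w s t f ∧
      (∀ e' ∈ E, e'.1 ∉ C → e'.2 ∈ C → f e' = 0) ∧
      f e = minCutCap E w s t - minCutCap (E.erase e) w s t ∧
      (∀ e' ∈ E, e' ≠ e → Contributes e' C → f e' = w e') := by
  set w' := Function.update w e (wMin E w s t e)
  have hw'_le : ∀ d ∈ E, w' d ≤ w d := fun d _ => by
    rcases eq_or_ne d e with rfl | hne
    · simpa [w'] using hC.wMin_le hst hvit
    · simp [w', hne]
  have hw'_nonneg : ∀ d ∈ E, 0 ≤ w' d := fun d hd => by
    rcases eq_or_ne d e with rfl | hne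
    · simpa [w', wMin] using hvit.2.le
    · simpa [w', hne] using (hpos d hd).le
  obtain ⟨f, hf⟩ := exists_isMaxFlow s t hw'_nonneg
  obtain ⟨R, hR, hfR⟩ := hf.exists_isCut_flowValue_eq_cutCap hst
  have hfC : flowValue E s f = cutCap E w' C :=
    le_antisymm (hf.1.flowValue_le_cutCap hC.1) (hfR ▸ hC.cutCap_update_wMin_le hst hvit hR)
  obtain ⟨hout, hin⟩ := (hf.1.flowValue_eq_cutCap_iff hC.1).1 hfC
  obtain ⟨C₀, hC₀, hC₀min⟩ := exists_isCut_cutCap_eq_minCutCap hst E w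
  refine ⟨f, ⟨hf.1.mono hw'_le, fun g hg => ?_⟩, hin, ?_, fun e' he' hne hco => ?_⟩
  · calc flowValue E s g ≤ cutCap E w C₀ := hg.flowValue_le_cutCap hC₀
      _ = cutCap E w' C := by rw [hC₀min, hC.cutCap_update_wMin hst hvit]
      _ = flowValue E s f := hfC.symm
  · simpa [w', wMin] using hout e hvit.1 hC.2.1
  · simpa [w', hne] using hout e' he' hco
end

section
/- For any pair of mincuts C and C' of the same vital edge e = (p,q), no edge of G goes between C∖C' and C'∖C (in either direction). -/
open Finset

variable {V : Type*} [Fintype V] [DecidableEq V]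

noncomputable def crossCap (E : Finset (V × V)) (w : V × V → ℝ) (C C' : Finset V) : ℝ :=
  ∑ a ∈ E.filter (fun a => (a.1 ∈ C ∧ a.1 ∉ C') ∧ (a.2 ∈ C' ∧ a.2 ∉ C)), w a

omit [Fintype V] in
theorem cutCap_add_cutCap (E : Finset (V × V)) (w : V × V → ℝ) (C C' : Finset V) :
    cutCap E w C + cutCap E w C' =
      cutCap E w (C ∩ C') + cutCap E w (C ∪ C') + crossCap E w C C' + crossCap E w C' C := by
  simp only [cutCap, crossCap, sum_filter, ← sum_add_distrib, mem_inter, mem_union]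
  refine sum_congr rfl fun a _ => ?_
  by_cases h₁ : a.1 ∈ C <;> by_cases h₂ : a.1 ∈ C' <;>
    by_cases h₃ : a.2 ∈ C <;> by_cases h₄ : a.2 ∈ C' <;> simp [h₁, h₂, h₃, h₄]

omit [Fintype V] in
theorem crossCap_nonneg {E : Finset (V × V)} {w : V × V → ℝ} (hw : ∀ a ∈ E, 0 ≤ w a)
    (C C' : Finset V) : 0 ≤ crossCap E w C C' :=
  sum_nonneg fun a ha => hw a (mem_filter.1 ha).1

omit [Fintype V] in
theorem crossCap_pos {E : Finset (V × V)} {w : V × V → ℝ} (hw : ∀ a ∈ E, 0 < w a)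
    {C C' : Finset V} {a : V × V} (ha : a ∈ E)
    (hcross : (a.1 ∈ C ∧ a.1 ∉ C') ∧ (a.2 ∈ C' ∧ a.2 ∉ C)) : 0 < crossCap E w C C' :=
  sum_pos' (fun b hb => (hw b (mem_filter.1 hb).1).le) ⟨a, mem_filter.2 ⟨ha, hcross⟩, hw a ha⟩

omit [Fintype V] in
theorem IsCut.inter {s t : V} {C C' : Finset V} (hC : IsCut s t C) (hC' : IsCut s t C') :
    IsCut s t (C ∩ C') :=
  ⟨mem_inter.2 ⟨hC.1, hC'.1⟩, fun h => hC.2 (mem_inter.1 h).1⟩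

omit [Fintype V] in
theorem IsCut.union {s t : V} {C C' : Finset V} (hC : IsCut s t C) (hC' : IsCut s t C') :
    IsCut s t (C ∪ C') :=
  ⟨mem_union_left _ hC.1, fun h => (mem_union.1 h).elim hC.2 hC'.2⟩

omit [Fintype V] in
theorem Contributes.inter {e : V × V} {C C' : Finset V} (hC : Contributes e C)
    (hC' : Contributes e C') : Contributes e (C ∩ C') :=
  ⟨mem_inter.2 ⟨hC.1, hC'.1⟩, fun h => hC.2 (mem_inter.1 h).1⟩

omit [Fintype V] in
theorem Contributes.union {e : V × V} {C C' : Finset V} (hC : Contributes e C)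
    (hC' : Contributes e C') : Contributes e (C ∪ C') :=
  ⟨mem_union_left _ hC.1, fun h => (mem_union.1 h).elim hC.2 hC'.2⟩

omit [Fintype V] in
/-- `C ∩ C'` and `C ∪ C'` are again cuts to which `e` contributes, so by minimality of `C` and `C'`
the slack `crossCap E w C C' + crossCap E w C' C` in `cutCap_add_cutCap` cannot be positive. -/
theorem IsMincutFor.crossCap_add_crossCap_nonpos {E : Finset (V × V)} {w : V × V → ℝ} {s t : V}
    {e : V × V} {C C' : Finset V} (hC : IsMincutFor E w s t e C)
    (hC' : IsMincutFor E w s t e C') : crossCap E w C C' + crossCap E w C' C ≤ 0 := by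
  have h_inter := hC.2.2 _ (hC.1.inter hC'.1) (hC.2.1.inter hC'.2.1)
  have h_union := hC'.2.2 _ (hC.1.union hC'.1) (hC.2.1.union hC'.2.1)
  linarith [cutCap_add_cutCap E w C C']

theorem no_edge_between_mincut_differences_general (E : Finset (V × V)) (w : V × V → ℝ)
    (s t : V) (hpos : ∀ e ∈ E, 0 < w e)
    (e : V × V) (C C' : Finset V)
    (hC : IsMincutFor E w s t e C) (hC' : IsMincutFor E w s t e C') :
    ∀ e' ∈ E,
      ¬ ((e'.1 ∈ C ∧ e'.1 ∉ C') ∧ (e'.2 ∈ C' ∧ e'.2 ∉ C)) ∧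
      ¬ ((e'.1 ∈ C' ∧ e'.1 ∉ C) ∧ (e'.2 ∈ C ∧ e'.2 ∉ C')) := by
  intro e' he'
  have h_cross := hC.crossCap_add_crossCap_nonpos hC'
  have h_nonneg := crossCap_nonneg (fun a ha => (hpos a ha).le) C C'
  have h_nonneg' := crossCap_nonneg (fun a ha => (hpos a ha).le) C' C
  exact ⟨fun h => (crossCap_pos hpos he' h).not_ge (by linarith),
    fun h => (crossCap_pos hpos he' h).not_ge (by linarith)⟩

/-- for any two mincuts `C`, `C'` of the same vital edge `e`, no edge of `G` goes
between `C ∖ C'` and `C' ∖ C` in either direction. -/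
theorem no_edge_between_mincut_differences (E : Finset (V × V)) (w : V × V → ℝ)
    (s t : V) (hst : s ≠ t) (hpos : ∀ e ∈ E, 0 < w e)
    (e : V × V) (hvit : Vital E w s t e) (C C' : Finset V)
    (hC : IsMincutFor E w s t e C) (hC' : IsMincutFor E w s t e C') :
    ∀ e' ∈ E,
      ¬ ((e'.1 ∈ C ∧ e'.1 ∉ C') ∧ (e'.2 ∈ C' ∧ e'.2 ∉ C)) ∧
      ¬ ((e'.1 ∈ C' ∧ e'.1 ∉ C) ∧ (e'.2 ∈ C ∧ e'.2 ∉ C')) :=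
  no_edge_between_mincut_differences_general E w s t hpos e C C' hC hC'
end
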